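/- arXiv:1207.6198 — 7 statements merged into one kernel-verified Lean document; each statement's English description precedes it below -/
import Mathlib

section
/- For ν a nonnegative integer, the polynomial P(R) = (β/(ν+2))R^{ν+3} − E·R + s² admits the factorization P(R) = (R − R₁)(R − R₂)Ψ(R), where Ψ(R) = (β/((ν+2)(R₂−R₁)))·Σ_{k=0}^{ν+1} R^{ν+1−k}(R₂^{k+1} − R₁^{k+1}), provided R₁ ≠ R₂ are two distinct positive roots of P. -/
/-!
Writing `S_x(R) = ∑_{k ≤ n} R^(n-k) x^(k+1)`, the geometric-sum identity gives
`(x - R) S_x(R) = x^(n+2) - x R^(n+1)`. Combining this for `x = R₁` and `x = R₂` yields a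
Lagrange-type identity for `(R - R₁)(R - R₂)(S_{R₂} - S_{R₁})`; substituting the root
conditions `a Rᵢ^(n+2) = E Rᵢ - c` (with `a = β/(ν+2)`, `c = s²`, `n = ν+1`) turns it into
`(R₂ - R₁) P(R)`.
-/

open Finset

section CommRing

variable {α : Type*} [CommRing α]

theorem sum_pow_mul_pow_succ_mul_sub (R x : α) (n : ℕ) :
    (∑ k ∈ range (n + 1), R ^ (n - k) * x ^ (k + 1)) * (x - R) = x ^ (n + 2) - x * R ^ (n + 1) := by
  have hgeom : ∑ k ∈ range (n + 1), R ^ (n - k) * x ^ (k + 1)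
      = x * ∑ k ∈ range (n + 1), x ^ k * R ^ (n + 1 - 1 - k) := by
    rw [mul_sum]
    refine sum_congr rfl fun k _ => ?_
    rw [Nat.add_sub_cancel, pow_succ]
    ring
  rw [hgeom, mul_assoc, geom_sum₂_mul]
  ring

theorem sub_mul_sub_mul_sum_pow_mul_pow_sub_pow (R x y : α) (n : ℕ) :
    (R - x) * (R - y) * ∑ k ∈ range (n + 1), R ^ (n - k) * (y ^ (k + 1) - x ^ (k + 1))
      = (y - x) * R ^ (n + 2) - (R - x) * y ^ (n + 2) + (R - y) * x ^ (n + 2) := by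
  simp only [mul_sub, sum_sub_distrib]
  linear_combination (R - y) * sum_pow_mul_pow_succ_mul_sub R x n
    - (R - x) * sum_pow_mul_pow_succ_mul_sub R y n

end CommRing

theorem eq_sub_mul_sub_mul_of_two_roots {K : Type*} [Field K] {f : K → K} {a E c x y : K} (n : ℕ)
    (hf : ∀ R, f R = a * R ^ (n + 2) - E * R + c) (hx : f x = 0) (hy : f y = 0) (hxy : x ≠ y)
    (R : K) :
    f R = (R - x) * (R - y) *
      (a / (y - x) * ∑ k ∈ range (n + 1), R ^ (n - k) * (y ^ (k + 1) - x ^ (k + 1))) := by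
  have hyx : y - x ≠ 0 := sub_ne_zero.mpr hxy.symm
  rw [hf] at hx hy ⊢
  rw [mul_left_comm, sub_mul_sub_mul_sum_pow_mul_pow_sub_pow]
  field_simp
  linear_combination (R - x) * hy - (R - y) * hx

theorem stmt1_general (β s R₁ R₂ : ℝ) (ν : ℕ) (hne : R₁ ≠ R₂)
    (E : ℝ)
    (P : ℝ → ℝ) (hP : ∀ R, P R = β / ((ν : ℝ) + 2) * R ^ (ν + 3) - E * R + s ^ 2)
    (hroot₁ : P R₁ = 0) (hroot₂ : P R₂ = 0)
    (Ψ : ℝ → ℝ)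
    (hΨ : ∀ R, Ψ R = β / (((ν : ℝ) + 2) * (R₂ - R₁)) *
      ∑ k ∈ Finset.range (ν + 2), R ^ (ν + 1 - k) * (R₂ ^ (k + 1) - R₁ ^ (k + 1))) :
    ∀ R, P R = (R - R₁) * (R - R₂) * Ψ R := by
  intro R
  rw [hΨ, ← div_div]
  exact eq_sub_mul_sub_mul_of_two_roots (ν + 1) hP hroot₁ hroot₂ hne R

/-- factorization P(R) = (R − R₁)(R − R₂)Ψ(R) with
Ψ(R) = (β/((ν+2)(R₂−R₁)))·Σ_{k=0}^{ν+1} R^{ν+1−k}(R₂^{k+1} − R₁^{k+1}),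
where R₁ ≠ R₂ are two distinct positive roots of P. -/
theorem stmt1 (β s R₁ R₂ : ℝ) (ν : ℕ) (hβ : 0 < β) (hs : s ≠ 0)
    (hR₁ : 0 < R₁) (hR₂ : 0 < R₂) (hne : R₁ ≠ R₂)
    (E : ℝ) (hE : E = s ^ 2 / R₁ + β / ((ν : ℝ) + 2) * R₁ ^ (ν + 2))
    (P : ℝ → ℝ) (hP : ∀ R, P R = β / ((ν : ℝ) + 2) * R ^ (ν + 3) - E * R + s ^ 2)
    (hroot₁ : P R₁ = 0) (hroot₂ : P R₂ = 0)
    (Ψ : ℝ → ℝ)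
    (hΨ : ∀ R, Ψ R = β / (((ν : ℝ) + 2) * (R₂ - R₁)) *
      ∑ k ∈ Finset.range (ν + 2), R ^ (ν + 1 - k) * (R₂ ^ (k + 1) - R₁ ^ (k + 1))) :
    ∀ R, P R = (R - R₁) * (R - R₂) * Ψ R :=
  stmt1_general β s R₁ R₂ ν hne E P hP hroot₁ hroot₂ Ψ hΨ
end

section
/- Let E = s²/R₁ + (β/(ν+2))R₁^{ν+2} with β, R₁ > 0. The second positive root R₂ of P(R) = (β/(ν+2))R^{ν+3} − E·R + s² satisfies R₂ > R₁ if and only if s² > β R₁^{ν+3}, and R₂ < R₁ if and only if s² < β R₁^{ν+3} (assuming s² ≠ β R₁^{ν+3} so the roots are distinct). -/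
/-!
Multiplying `P(R₂) = 0` by `R₁` and eliminating `E` through `E R₁ = s² + (β/(ν+2)) R₁^{ν+3}` gives
`(s² − β R₁^{ν+3}) (R₂ − R₁) = (β/(ν+2)) R₁ (R₂^{ν+3} − T(R₂))`, where `T` is the tangent line of
`x ↦ x^{ν+3}` at `R₁`. This power is strictly convex on `[0, ∞)` (a strict Bernoulli inequality),
so the right-hand side is positive as soon as `R₂ ≠ R₁`: `s² − β R₁^{ν+3}` and `R₂ − R₁` have the
same sign.
-/

theorem pow_add_mul_sub_lt_pow {R : Type*} [CommRing R] [LinearOrder R] [IsStrictOrderedRing R]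
    {a b : R} (ha : 0 < a) (hb : 0 ≤ b) (hab : b ≠ a) (n : ℕ) :
    a ^ (n + 2) + (n + 2) * a ^ (n + 1) * (b - a) < b ^ (n + 2) := by
  have bernoulli := pow_add_mul_le_add_pow (b := b - a) ha.le (by linarith) (n + 1)
  simp only [add_tsub_cancel_right, add_sub_cancel, Nat.cast_add, Nat.cast_one] at bernoulli
  have hsq : 0 < ((n : R) + 1) * a ^ n * (b - a) ^ 2 := by
    have : (b - a) ^ 2 ≠ 0 := pow_ne_zero 2 (sub_ne_zero.2 hab)
    positivity
  -- the tangent-line gap at exponent `n + 2` is `b` times the gap at `n + 1`, plus `hsq`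
  linear_combination hsq + mul_le_mul_of_nonneg_left bernoulli hb

theorem sub_mul_sub_eq_of_root {β s E R₁ R₂ : ℝ} (ν : ℕ) (hR₁ : R₁ ≠ 0)
    (hE : E = s ^ 2 / R₁ + β / ((ν : ℝ) + 2) * R₁ ^ (ν + 2))
    (hroot : β / ((ν : ℝ) + 2) * R₂ ^ (ν + 3) - E * R₂ + s ^ 2 = 0) :
    (s ^ 2 - β * R₁ ^ (ν + 3)) * (R₂ - R₁) =
      β / ((ν : ℝ) + 2) * R₁ *
        (R₂ ^ (ν + 3) - (R₁ ^ (ν + 3) + ((ν : ℝ) + 3) * R₁ ^ (ν + 2) * (R₂ - R₁))) := by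
  have hER₁ : E * R₁ = s ^ 2 + β / ((ν : ℝ) + 2) * R₁ ^ (ν + 3) := by
    rw [hE]
    field_simp
    ring
  have hβ : β = β / ((ν : ℝ) + 2) * ((ν : ℝ) + 2) := by field_simp
  linear_combination (-R₁) * hroot - R₂ * hER₁ + (R₁ ^ (ν + 3) * (R₁ - R₂)) * hβ

theorem stmt3_general (β s R₁ R₂ : ℝ) (ν : ℕ) (hβ : 0 < β)
    (hR₁ : 0 < R₁) (hR₂ : 0 < R₂)
    (E : ℝ) (hE : E = s ^ 2 / R₁ + β / ((ν : ℝ) + 2) * R₁ ^ (ν + 2))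
    (hroot₂ : β / ((ν : ℝ) + 2) * R₂ ^ (ν + 3) - E * R₂ + s ^ 2 = 0)
    (hne : R₂ ≠ R₁) :
    (R₁ < R₂ ↔ β * R₁ ^ (ν + 3) < s ^ 2) ∧
    (R₂ < R₁ ↔ s ^ 2 < β * R₁ ^ (ν + 3)) := by
  have hgap : R₁ ^ (ν + 3) + ((ν : ℝ) + 3) * R₁ ^ (ν + 2) * (R₂ - R₁) < R₂ ^ (ν + 3) := by
    calc R₁ ^ (ν + 3) + ((ν : ℝ) + 3) * R₁ ^ (ν + 2) * (R₂ - R₁)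
        = R₁ ^ (ν + 1 + 2) + ((ν + 1 : ℕ) + 2) * R₁ ^ (ν + 1 + 1) * (R₂ - R₁) := by
          push_cast
          ring
      _ < R₂ ^ (ν + 1 + 2) := pow_add_mul_sub_lt_pow hR₁ hR₂.le hne (ν + 1)
  have hsign : 0 < (s ^ 2 - β * R₁ ^ (ν + 3)) * (R₂ - R₁) := by
    rw [sub_mul_sub_eq_of_root ν hR₁.ne' hE hroot₂]
    exact mul_pos (by positivity) (sub_pos.2 hgap)
  constructor
  · rw [← sub_pos (a := R₂), ← sub_pos (a := s ^ 2)]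
    exact (pos_iff_pos_of_mul_pos hsign).symm
  · rw [← sub_neg (a := R₂), ← sub_neg (a := s ^ 2)]
    exact (neg_iff_neg_of_mul_pos hsign).symm

/-- the second positive root R₂ of
P(R) = (β/(ν+2))R^{ν+3} − E·R + s² (with E = s²/R₁ + (β/(ν+2))R₁^{ν+2})
satisfies R₂ > R₁ iff s² > βR₁^{ν+3}, and R₂ < R₁ iff s² < βR₁^{ν+3},
assuming s² ≠ βR₁^{ν+3} (so the roots are distinct). -/
theorem stmt3 (β s R₁ R₂ : ℝ) (ν : ℕ) (hβ : 0 < β)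
    (hR₁ : 0 < R₁) (hR₂ : 0 < R₂)
    (E : ℝ) (hE : E = s ^ 2 / R₁ + β / ((ν : ℝ) + 2) * R₁ ^ (ν + 2))
    (hroot₂ : β / ((ν : ℝ) + 2) * R₂ ^ (ν + 3) - E * R₂ + s ^ 2 = 0)
    (hne : R₂ ≠ R₁) (hcrit : s ^ 2 ≠ β * R₁ ^ (ν + 3)) :
    (R₁ < R₂ ↔ β * R₁ ^ (ν + 3) < s ^ 2) ∧
    (R₂ < R₁ ↔ s ^ 2 < β * R₁ ^ (ν + 3)) :=
  stmt3_general β s R₁ R₂ ν hβ hR₁ hR₂ E hE hroot₂ hne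
end

section
/- The function H(R,Y) = 2s²·R^{ν+1}/(ν+1) + (β/(ν+2)²)R^{2(ν+2)} + γ·Y²·R^{2(ν+1)} − 2E·R^{ν+2}/(ν+2) is a first integral of the planar ODE system dR/dz = Y, dY/dz = (γR^{ν+2})^{-1}[E·R − s² − (β/(ν+2))R^{ν+3} − γ(ν+1)R^{ν+1}Y²]: along any solution (R(z), Y(z)) with R(z) > 0, the derivative d/dz H(R(z), Y(z)) = 0. -/
noncomputable def firstIntegral (β γ s E : ℝ) (ν : ℕ) (r y : ℝ) : ℝ :=
  2 * s ^ 2 * r ^ (ν + 1) / ((ν : ℝ) + 1)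
    + β / ((ν : ℝ) + 2) ^ 2 * r ^ (2 * (ν + 2))
    + γ * y ^ 2 * r ^ (2 * (ν + 1))
    - 2 * E * r ^ (ν + 2) / ((ν : ℝ) + 2)

theorem hasDerivAt_firstIntegral (β γ s E : ℝ) (ν : ℕ) {R Y : ℝ → ℝ} {R' Y' z : ℝ}
    (hR : HasDerivAt R R' z) (hY : HasDerivAt Y Y' z) :
    HasDerivAt (fun z => firstIntegral β γ s E ν (R z) (Y z))
      (2 * R z ^ ν * R' * (s ^ 2 + β / ((ν : ℝ) + 2) * R z ^ (ν + 3)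
          + γ * ((ν : ℝ) + 1) * R z ^ (ν + 1) * Y z ^ 2 - E * R z)
        + 2 * γ * R z ^ (2 * (ν + 1)) * Y z * Y') z := by
  have hν1 : (ν : ℝ) + 1 ≠ 0 := by positivity
  have hν2 : (ν : ℝ) + 2 ≠ 0 := by positivity
  have h := ((((hR.pow (ν + 1)).const_mul (2 * s ^ 2)).div_const ((ν : ℝ) + 1)).add
      ((hR.pow (2 * (ν + 2))).const_mul (β / ((ν : ℝ) + 2) ^ 2))).add
      (((hY.pow 2).const_mul γ).mul (hR.pow (2 * (ν + 1)))) |>.sub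
      (((hR.pow (ν + 2)).const_mul (2 * E)).div_const ((ν : ℝ) + 2))
  refine h.congr_deriv ?_
  rw [show 2 * (ν + 2) - 1 = 2 * ν + 3 by omega, show 2 * (ν + 1) - 1 = 2 * ν + 1 by omega,
    Nat.add_sub_cancel, show ν + 2 - 1 = ν + 1 by omega]
  simp only [Pi.pow_apply]
  push_cast
  field_simp
  ring

theorem stmt4_general (β γ s E : ℝ) (ν : ℕ) (hγ : γ ≠ 0)
    (R Y : ℝ → ℝ) (hpos : ∀ z, 0 < R z)
    (hR : ∀ z, HasDerivAt R (Y z) z)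
    (hY : ∀ z, HasDerivAt Y
      ((γ * R z ^ (ν + 2))⁻¹ *
        (E * R z - (s ^ 2 + β / ((ν : ℝ) + 2) * R z ^ (ν + 3)
          + γ * ((ν : ℝ) + 1) * R z ^ (ν + 1) * Y z ^ 2))) z) :
    ∀ z, HasDerivAt (fun z =>
      2 * s ^ 2 * R z ^ (ν + 1) / ((ν : ℝ) + 1)
        + β / ((ν : ℝ) + 2) ^ 2 * R z ^ (2 * (ν + 2))
        + γ * Y z ^ 2 * R z ^ (2 * (ν + 1))
        - 2 * E * R z ^ (ν + 2) / ((ν : ℝ) + 2)) 0 z := by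
  intro z
  have hRz : R z ≠ 0 := (hpos z).ne'
  refine (hasDerivAt_firstIntegral β γ s E ν (hR z) (hY z)).congr_deriv ?_
  -- `2γR^{2ν+2}·Y·Y' = 2R^ν·Y·(γR^{ν+2}Y')`, and `γR^{ν+2}Y'` is minus the bracket of the first term.
  field_simp
  ring

/-- H(R,Y) = 2s²R^{ν+1}/(ν+1) + (β/(ν+2)²)R^{2(ν+2)}
+ γY²R^{2(ν+1)} − 2E·R^{ν+2}/(ν+2) is a first integral of the system
dR/dz = Y, dY/dz = (γR^{ν+2})⁻¹[ER − s² − (β/(ν+2))R^{ν+3} − γ(ν+1)R^{ν+1}Y²]: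
along any solution with R > 0 the derivative of z ↦ H(R z, Y z) vanishes. -/
theorem stmt4 (β γ s E : ℝ) (ν : ℕ) (hβ : 0 < β) (hγ : γ ≠ 0)
    (R Y : ℝ → ℝ) (hpos : ∀ z, 0 < R z)
    (hR : ∀ z, HasDerivAt R (Y z) z)
    (hY : ∀ z, HasDerivAt Y
      ((γ * R z ^ (ν + 2))⁻¹ *
        (E * R z - (s ^ 2 + β / ((ν : ℝ) + 2) * R z ^ (ν + 3)
          + γ * ((ν : ℝ) + 1) * R z ^ (ν + 1) * Y z ^ 2))) z) :
    ∀ z, HasDerivAt (fun z =>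
      2 * s ^ 2 * R z ^ (ν + 1) / ((ν : ℝ) + 1)
        + β / ((ν : ℝ) + 2) ^ 2 * R z ^ (2 * (ν + 2))
        + γ * Y z ^ 2 * R z ^ (2 * (ν + 1))
        - 2 * E * R z ^ (ν + 2) / ((ν : ℝ) + 2)) 0 z :=
  stmt4_general β γ s E ν hγ R Y hpos hR hY
end

section
/- Let ω = √(β/γ) with β, γ > 0. For smooth solutions of the system u_t + βρ^{ν+1}ρ_x + γ[ρ^{ν+1}ρ_{xxx} + 3(1+ν)ρ^ν ρ_x ρ_{xx} + ν(1+ν)ρ^{ν−1}ρ_x³] = 0, ρ_t + ρ²u_x = 0, the pair R₃ = u·sin(ωx), S₃ = (cos(ωx)/ω)·βρ^{ν+1}ρ_x − sin(ωx)·γ(ρ^{ν+1}ρ_x)_x satisfies ∂_t R₃ = ∂_x S₃. -/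
/-- with ω = √(β/γ), β, γ > 0, for smooth solutions of the system
the pair R₃ = u·sin(ωx),
S₃ = (cos(ωx)/ω)·βρ^{ν+1}ρ_x − sin(ωx)·γ(ρ^{ν+1}ρ_x)_x satisfies ∂_t R₃ = ∂_x S₃. -/
theorem stmt11 (β γ ν : ℝ) (hβ : 0 < β) (hγ : 0 < γ) (u ρ : ℝ → ℝ → ℝ)
    (hu : ContDiff ℝ (⊤ : ℕ∞) (Function.uncurry u))
    (hρ : ContDiff ℝ (⊤ : ℕ∞) (Function.uncurry ρ))
    (hpos : ∀ t x, 0 < ρ t x)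
    (heq1 : ∀ t x, deriv (fun τ => u τ x) t
      + β * ρ t x ^ (ν + 1) * deriv (ρ t) x
      + γ * (ρ t x ^ (ν + 1) * deriv (deriv (deriv (ρ t))) x
        + 3 * (1 + ν) * ρ t x ^ ν * deriv (ρ t) x * deriv (deriv (ρ t)) x
        + ν * (1 + ν) * ρ t x ^ (ν - 1) * deriv (ρ t) x ^ 3) = 0)
    (heq2 : ∀ t x, deriv (fun τ => ρ τ x) t + ρ t x ^ 2 * deriv (u t) x = 0)
    (ω : ℝ) (hω : ω = Real.sqrt (β / γ)) :
    ∀ t x, deriv (fun τ => u τ x * Real.sin (ω * x)) t =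
      deriv (fun y => Real.cos (ω * y) / ω * (β * ρ t y ^ (ν + 1) * deriv (ρ t) y)
        - Real.sin (ω * y) * γ *
            deriv (fun y' => ρ t y' ^ (ν + 1) * deriv (ρ t) y') y) x := by
  have hω0 : 0 < ω := by
    rw [hω]; exact Real.sqrt_pos.mpr (div_pos hβ hγ)
  have hω2 : ω ^ 2 * γ = β := by
    rw [hω, Real.sq_sqrt (div_pos hβ hγ).le]
    field_simp
  intro t x
  have hf : ContDiff ℝ (⊤ : ℕ∞) (ρ t) := hρ.comp (contDiff_const.prodMk contDiff_id)
  have hfd : Differentiable ℝ (ρ t) := hf.differentiable (by simp)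
  have hfi : ContDiff ℝ (⊤ : ℕ∞) (ρ t) := hf.of_le (by simp)
  have hf1 : ContDiff ℝ (⊤ : ℕ∞) (deriv (ρ t)) := (contDiff_infty_iff_deriv.mp hfi).2
  have hf1d : Differentiable ℝ (deriv (ρ t)) := hf1.differentiable (by simp)
  have hf2 : ContDiff ℝ (⊤ : ℕ∞) (deriv (deriv (ρ t))) := (contDiff_infty_iff_deriv.mp hf1).2
  have hf2d : Differentiable ℝ (deriv (deriv (ρ t))) := hf2.differentiable (by simp)
  set g : ℝ → ℝ := fun y => ρ t y ^ (ν + 1) * deriv (ρ t) y with hgdef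
  -- first derivative of g
  have hgd : ∀ y, HasDerivAt g
      ((ν + 1) * ρ t y ^ ν * deriv (ρ t) y ^ 2
        + ρ t y ^ (ν + 1) * deriv (deriv (ρ t)) y) y := by
    intro y
    have h1 : HasDerivAt (fun z => ρ t z ^ (ν + 1))
        (deriv (ρ t) y * (ν + 1) * ρ t y ^ (ν + 1 - 1)) y :=
      ((hfd y).hasDerivAt).rpow_const (Or.inl (hpos t y).ne')
    have h2 : HasDerivAt (deriv (ρ t)) (deriv (deriv (ρ t)) y) y := (hf1d y).hasDerivAt
    have h3 := h1.mul h2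
    exact h3.congr_deriv (by simp only [show ν + 1 - 1 = ν from by ring]; ring)
  have hg' : deriv g = fun y => (ν + 1) * ρ t y ^ ν * deriv (ρ t) y ^ 2
      + ρ t y ^ (ν + 1) * deriv (deriv (ρ t)) y := funext fun y => (hgd y).deriv
  -- second derivative of g at x
  have hgd2 : HasDerivAt (deriv g)
      (ρ t x ^ (ν + 1) * deriv (deriv (deriv (ρ t))) x
        + 3 * (1 + ν) * ρ t x ^ ν * deriv (ρ t) x * deriv (deriv (ρ t)) x
        + ν * (1 + ν) * ρ t x ^ (ν - 1) * deriv (ρ t) x ^ 3) x := by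
    rw [hg']
    have hA : HasDerivAt (fun z => ρ t z ^ ν)
        (deriv (ρ t) x * ν * ρ t x ^ (ν - 1)) x :=
      ((hfd x).hasDerivAt).rpow_const (Or.inl (hpos t x).ne')
    have hB : HasDerivAt (fun z => deriv (ρ t) z ^ 2)
        (2 * deriv (ρ t) x ^ 1 * deriv (deriv (ρ t)) x) x :=
      ((hf1d x).hasDerivAt).pow 2
    have hC : HasDerivAt (fun z => ρ t z ^ (ν + 1))
        (deriv (ρ t) x * (ν + 1) * ρ t x ^ (ν + 1 - 1)) x :=
      ((hfd x).hasDerivAt).rpow_const (Or.inl (hpos t x).ne')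
    have hD : HasDerivAt (deriv (deriv (ρ t))) (deriv (deriv (deriv (ρ t))) x) x :=
      (hf2d x).hasDerivAt
    rw [show ν + 1 - 1 = ν from by ring] at hC
    have h := ((hA.mul hB).const_mul (ν + 1)).add (hC.mul hD)
    have hfun : (fun y => (ν + 1) * ρ t y ^ ν * deriv (ρ t) y ^ 2
        + ρ t y ^ (ν + 1) * deriv (deriv (ρ t)) y)
        = fun y => (ν + 1) * (ρ t y ^ ν * deriv (ρ t) y ^ 2)
          + ρ t y ^ (ν + 1) * deriv (deriv (ρ t)) y := by
      funext y; ring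
    rw [hfun]
    exact h.congr_deriv (by ring)
  -- LHS
  have hut : DifferentiableAt ℝ (fun τ => u τ x) t := by
    have : ContDiff ℝ (⊤ : ℕ∞) (fun τ => u τ x) := hu.comp (contDiff_id.prodMk contDiff_const)
    exact (this.differentiable (by simp)) t
  rw [deriv_mul_const hut]
  -- RHS
  have hlin : HasDerivAt (fun y : ℝ => ω * y) ω x := by
    simpa using (hasDerivAt_id x).const_mul ω
  have hc : HasDerivAt (fun y => Real.cos (ω * y) / ω)
      (-Real.sin (ω * x) * ω / ω) x := hlin.cos.div_const ω
  have hbg : HasDerivAt (fun y => β * ρ t y ^ (ν + 1) * deriv (ρ t) y)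
      (β * ((ν + 1) * ρ t x ^ ν * deriv (ρ t) x ^ 2
        + ρ t x ^ (ν + 1) * deriv (deriv (ρ t)) x)) x := by
    have := (hgd x).const_mul β
    simpa [hgdef, mul_assoc] using this
  have hsg : HasDerivAt (fun y => Real.sin (ω * y) * γ)
      (Real.cos (ω * x) * ω * γ) x := hlin.sin.mul_const γ
  have hS := (hc.mul hbg).sub (hsg.mul hgd2)
  rw [show deriv (fun y => Real.cos (ω * y) / ω * (β * ρ t y ^ (ν + 1) * deriv (ρ t) y)
    - Real.sin (ω * y) * γ * deriv g y) x = _ from hS.deriv]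
  have h1 := heq1 t x
  have hu_t : deriv (fun τ => u τ x) t =
      -(β * ρ t x ^ (ν + 1) * deriv (ρ t) x)
      - γ * (ρ t x ^ (ν + 1) * deriv (deriv (deriv (ρ t))) x
        + 3 * (1 + ν) * ρ t x ^ ν * deriv (ρ t) x * deriv (deriv (ρ t)) x
        + ν * (1 + ν) * ρ t x ^ (ν - 1) * deriv (ρ t) x ^ 3) := by linarith
  rw [hu_t]
  have hdg : deriv g x = (ν + 1) * ρ t x ^ ν * deriv (ρ t) x ^ 2
      + ρ t x ^ (ν + 1) * deriv (deriv (ρ t)) x := (hgd x).deriv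
  rw [hdg, ← hω2]
  field_simp
  ring
end

section
/- Let ω̃ = √(−β/γ) with β > 0, γ < 0. For smooth solutions of the same PDE system, the pair R̃₆ = t·u·sinh(ω̃x) + cosh(ω̃x)/(ω̃ρ), S̃₆ = t·S̃₃ + u·cosh(ω̃x)/ω̃, with S̃₃ = −(cosh(ω̃x)/ω̃)·βρ^{ν+1}ρ_x − sinh(ω̃x)·γ(ρ^{ν+1}ρ_x)_x, satisfies ∂_t R̃₆ = ∂_x S̃₆. -/
/-- with ω̃ = √(−β/γ), β > 0, γ < 0, for smooth solutions of the
system the pair R̃₆ = t·u·sinh(ω̃x) + cosh(ω̃x)/(ω̃ρ),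
S̃₆ = t·S̃₃ + u·cosh(ω̃x)/ω̃, where
S̃₃ = −(cosh(ω̃x)/ω̃)·βρ^{ν+1}ρ_x − sinh(ω̃x)·γ(ρ^{ν+1}ρ_x)_x,
satisfies ∂_t R̃₆ = ∂_x S̃₆. -/
theorem stmt12 (β γ ν : ℝ) (hβ : 0 < β) (hγ : γ < 0) (u ρ : ℝ → ℝ → ℝ)
    (hu : ContDiff ℝ (⊤ : ℕ∞) (Function.uncurry u))
    (hρ : ContDiff ℝ (⊤ : ℕ∞) (Function.uncurry ρ))
    (hpos : ∀ t x, 0 < ρ t x)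
    (heq1 : ∀ t x, deriv (fun τ => u τ x) t
      + β * ρ t x ^ (ν + 1) * deriv (ρ t) x
      + γ * (ρ t x ^ (ν + 1) * deriv (deriv (deriv (ρ t))) x
        + 3 * (1 + ν) * ρ t x ^ ν * deriv (ρ t) x * deriv (deriv (ρ t)) x
        + ν * (1 + ν) * ρ t x ^ (ν - 1) * deriv (ρ t) x ^ 3) = 0)
    (heq2 : ∀ t x, deriv (fun τ => ρ τ x) t + ρ t x ^ 2 * deriv (u t) x = 0)
    (ω : ℝ) (hω : ω = Real.sqrt (-β / γ)) :
    ∀ t x, deriv (fun τ => τ * u τ x * Real.sinh (ω * x)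
        + Real.cosh (ω * x) / (ω * ρ τ x)) t =
      deriv (fun y =>
        t * (-(Real.cosh (ω * y) / ω) * (β * ρ t y ^ (ν + 1) * deriv (ρ t) y)
          - Real.sinh (ω * y) * γ *
              deriv (fun y' => ρ t y' ^ (ν + 1) * deriv (ρ t) y') y)
        + u t y * Real.cosh (ω * y) / ω) x := by
  have hdiv : 0 < -β / γ := div_pos_of_neg_of_neg (by linarith) hγ
  have hω0 : 0 < ω := hω ▸ Real.sqrt_pos.2 hdiv
  have hω2 : γ * ω ^ 2 = -β := by
    rw [hω, Real.sq_sqrt hdiv.le, mul_div_cancel₀ _ hγ.ne]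
  have hle : (1 : WithTop ℕ∞) ≤ ((⊤:ℕ∞) : WithTop ℕ∞) := by exact_mod_cast le_top
  intro t x
  -- smoothness of slices
  have hρs : ContDiff ℝ ((⊤:ℕ∞) : WithTop ℕ∞) (ρ t) :=
    (hρ.of_le (by simp)).comp (contDiff_const.prodMk contDiff_id)
  have hρ1 : ContDiff ℝ ((⊤:ℕ∞) : WithTop ℕ∞) (deriv (ρ t)) := by
    simpa using hρs.iterate_deriv 1
  have hρ2 : ContDiff ℝ ((⊤:ℕ∞) : WithTop ℕ∞) (deriv (deriv (ρ t))) := by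
    simpa [Function.iterate_succ, Function.comp] using hρs.iterate_deriv 2
  have hus : ContDiff ℝ ((⊤:ℕ∞) : WithTop ℕ∞) (u t) :=
    (hu.of_le (by simp)).comp (contDiff_const.prodMk contDiff_id)
  -- pointwise derivatives in x
  have hr : ∀ y, HasDerivAt (ρ t) (deriv (ρ t) y) y := fun y =>
    ((hρs.differentiable (zero_lt_one.trans_le hle).ne') y).hasDerivAt
  have hr1 : ∀ y, HasDerivAt (deriv (ρ t)) (deriv (deriv (ρ t)) y) y := fun y =>
    ((hρ1.differentiable (zero_lt_one.trans_le hle).ne') y).hasDerivAt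
  have hr2 : HasDerivAt (deriv (deriv (ρ t))) (deriv (deriv (deriv (ρ t))) x) x :=
    ((hρ2.differentiable (zero_lt_one.trans_le hle).ne') x).hasDerivAt
  have hux : HasDerivAt (u t) (deriv (u t) x) x :=
    ((hus.differentiable (zero_lt_one.trans_le hle).ne') x).hasDerivAt
  -- rpow derivatives
  have hA : ∀ y, HasDerivAt (fun y' => ρ t y' ^ (ν + 1))
      ((ν + 1) * ρ t y ^ ν * deriv (ρ t) y) y := fun y => by
    have h := (hr y).rpow_const (p := ν + 1) (Or.inl (hpos t y).ne')
    rw [show ν + 1 - 1 = ν by ring] at h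
    convert h using 1; ring
  have hN : HasDerivAt (fun y' => ρ t y' ^ ν)
      (ν * ρ t x ^ (ν - 1) * deriv (ρ t) x) x := by
    have h := (hr x).rpow_const (p := ν) (Or.inl (hpos t x).ne')
    convert h using 1; ring
  -- first derivative of P = ρ^{ν+1} ρ_x
  have hP : ∀ y, HasDerivAt (fun y' => ρ t y' ^ (ν + 1) * deriv (ρ t) y')
      ((ν + 1) * ρ t y ^ ν * deriv (ρ t) y ^ 2
        + ρ t y ^ (ν + 1) * deriv (deriv (ρ t)) y) y := fun y => by
    have h := (hA y).fun_mul (hr1 y)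
    refine h.congr_deriv ?_; ring
  have hPeq : deriv (fun y' => ρ t y' ^ (ν + 1) * deriv (ρ t) y')
      = fun y => (ν + 1) * ρ t y ^ ν * deriv (ρ t) y ^ 2
        + ρ t y ^ (ν + 1) * deriv (deriv (ρ t)) y :=
    funext fun y => (hP y).deriv
  -- second derivative of P
  have hQ : HasDerivAt (deriv (fun y' => ρ t y' ^ (ν + 1) * deriv (ρ t) y'))
      (ρ t x ^ (ν + 1) * deriv (deriv (deriv (ρ t))) x
        + 3 * (1 + ν) * ρ t x ^ ν * deriv (ρ t) x * deriv (deriv (ρ t)) x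
        + ν * (1 + ν) * ρ t x ^ (ν - 1) * deriv (ρ t) x ^ 3) x := by
    rw [hPeq]
    have h := ((hN.const_mul (ν + 1)).fun_mul ((hr1 x).fun_pow 2)).fun_add ((hA x).fun_mul hr2)
    refine h.congr_deriv ?_; ring
  -- trigonometric derivatives
  have hlin : ∀ y : ℝ, HasDerivAt (fun y' : ℝ => ω * y') ω y := fun y => by
    simpa using (hasDerivAt_id y).const_mul ω
  have hc : ∀ y, HasDerivAt (fun y' => Real.cosh (ω * y')) (Real.sinh (ω * y) * ω) y :=
    fun y => (hlin y).cosh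
  have hs : ∀ y, HasDerivAt (fun y' => Real.sinh (ω * y')) (Real.cosh (ω * y) * ω) y :=
    fun y => (hlin y).sinh
  -- t-derivatives
  have hut : HasDerivAt (fun τ => u τ x) (deriv (fun τ => u τ x) t) t :=
    ((((hu.of_le (by simp)).comp (contDiff_id.prodMk contDiff_const)).differentiable (zero_lt_one.trans_le hle).ne')
      t).hasDerivAt
  have hrt : HasDerivAt (fun τ => ρ τ x) (deriv (fun τ => ρ τ x) t) t :=
    ((((hρ.of_le (by simp)).comp (contDiff_id.prodMk contDiff_const)).differentiable (zero_lt_one.trans_le hle).ne')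
      t).hasDerivAt
  have hne : (ω * ρ t x) ≠ 0 := (mul_pos hω0 (hpos t x)).ne'
  -- LHS derivative
  have hT : HasDerivAt (fun τ => τ * u τ x * Real.sinh (ω * x)
        + Real.cosh (ω * x) / (ω * ρ τ x))
      (u t x * Real.sinh (ω * x)
        + t * deriv (fun τ => u τ x) t * Real.sinh (ω * x)
        - Real.cosh (ω * x) * deriv (fun τ => ρ τ x) t / (ω * ρ t x ^ 2)) t := by
    have h := (((hasDerivAt_id t).fun_mul hut).mul_const (Real.sinh (ω * x))).fun_add
      ((hasDerivAt_const t (Real.cosh (ω * x))).div (hrt.const_mul ω) hne)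
    refine h.congr_deriv ?_
    simp only [id_eq]
    field_simp [hω0.ne', (hpos t x).ne']
    ring
  -- RHS derivative
  have hS : HasDerivAt (fun y =>
        t * (-(Real.cosh (ω * y) / ω) * (β * ρ t y ^ (ν + 1) * deriv (ρ t) y)
          - Real.sinh (ω * y) * γ *
              deriv (fun y' => ρ t y' ^ (ν + 1) * deriv (ρ t) y') y)
        + u t y * Real.cosh (ω * y) / ω)
      (t * (-(Real.sinh (ω * x)) * (β * ρ t x ^ (ν + 1) * deriv (ρ t) x)
          - (β / ω + ω * γ) * Real.cosh (ω * x) *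
              ((ν + 1) * ρ t x ^ ν * deriv (ρ t) x ^ 2
                + ρ t x ^ (ν + 1) * deriv (deriv (ρ t)) x)
          - Real.sinh (ω * x) * γ *
              (ρ t x ^ (ν + 1) * deriv (deriv (deriv (ρ t))) x
                + 3 * (1 + ν) * ρ t x ^ ν * deriv (ρ t) x * deriv (deriv (ρ t)) x
                + ν * (1 + ν) * ρ t x ^ (ν - 1) * deriv (ρ t) x ^ 3))
        + deriv (u t) x * Real.cosh (ω * x) / ω + u t x * Real.sinh (ω * x)) x := by
    have h := (((((hc x).div_const ω).neg.fun_mul (((hA x).const_mul β).fun_mul (hr1 x))).fun_sub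
        ((((hs x).mul_const γ).fun_mul hQ))).const_mul t).fun_add
      ((hux.fun_mul (hc x)).div_const ω)
    refine h.congr_deriv ?_
    rw [hPeq]
    simp only [Pi.neg_apply]
    field_simp [hω0.ne', (hpos t x).ne']
    ring
  rw [hT.deriv, hS.deriv]
  have e1 : deriv (fun τ => u τ x) t
      = -(β * ρ t x ^ (ν + 1) * deriv (ρ t) x)
        - γ * (ρ t x ^ (ν + 1) * deriv (deriv (deriv (ρ t))) x
          + 3 * (1 + ν) * ρ t x ^ ν * deriv (ρ t) x * deriv (deriv (ρ t)) x
          + ν * (1 + ν) * ρ t x ^ (ν - 1) * deriv (ρ t) x ^ 3) := by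
    linarith [heq1 t x]
  have e2 : deriv (fun τ => ρ τ x) t = -(ρ t x ^ 2 * deriv (u t) x) := by
    linarith [heq2 t x]
  have hb : β / ω + ω * γ = 0 := by
    field_simp
    linear_combination hω2
  rw [e1, e2, hb]
  have hρne : ρ t x ≠ 0 := (hpos t x).ne'
  field_simp [hω0.ne', (hpos t x).ne']
  ring
end

section
/- The 4×4 matrix M̂(ξ,λ) = [[λ + iξs, iξR₁(γξ² − β)], [−iξR₁², λ + iξs]] (2×2) is singular if and only if λ = −iξs ± √((γξ² − β)ξ²R₁³). Consequently, if γ < 0 and β > 0 then for every real ξ both roots satisfy Re λ ≤ 0, while if γ > 0 and β > 0 there exists ξ ∈ ℝ with a root λ having Re λ > 0. -/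
/-!
Since det M̂ = (λ + iξs)² − (γξ² − β)ξ²R₁³, the claims reduce to the sign of the real number
(γξ² − β)ξ²R₁³. For γ < 0 < β it is nonpositive, and a complex number whose square is a
nonpositive real is purely imaginary, so Re λ = Re (λ + iξs) = 0. For γ, β > 0 it is positive
as soon as γξ² > β, and its positive square root, shifted by −iξs, is a root with Re λ > 0.
-/

open Complex

lemma Complex.re_eq_zero_of_sq_eq_ofReal_of_nonpos {z : ℂ} {r : ℝ} (hr : r ≤ 0)
    (h : z ^ 2 = r) : z.re = 0 := by
  have him : z.re * z.im = 0 := by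
    have := congrArg Complex.im h
    simp only [sq, mul_im, ofReal_im] at this
    linarith
  have hre : z.re ^ 2 - z.im ^ 2 = r := by
    have := congrArg Complex.re h
    simpa only [sq, mul_re, ofReal_re] using this
  rcases mul_eq_zero.mp him with h0 | h0
  · exact h0
  · rw [h0] at hre
    nlinarith

lemma Complex.exists_sq_eq_ofReal_re_pos {r : ℝ} (hr : 0 < r) :
    ∃ z : ℂ, z ^ 2 = r ∧ 0 < z.re :=
  ⟨(√r : ℝ), by rw [← ofReal_pow, Real.sq_sqrt hr.le], by simpa using hr⟩

lemma det_symbol (β γ s R₁ ξ : ℝ) (lam : ℂ) :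
    (!![lam + (ξ : ℂ) * (s : ℂ) * I, I * (ξ : ℂ) * (R₁ : ℂ) * ((γ : ℂ) * (ξ : ℂ) ^ 2 - (β : ℂ));
        -I * (ξ : ℂ) * (R₁ : ℂ) ^ 2, lam + (ξ : ℂ) * (s : ℂ) * I]).det =
      (lam + (ξ : ℂ) * (s : ℂ) * I) ^ 2 - (((γ * ξ ^ 2 - β) * ξ ^ 2 * R₁ ^ 3 : ℝ) : ℂ) := by
  rw [Matrix.det_fin_two_of]
  push_cast
  linear_combination ((ξ : ℂ) ^ 2 * (R₁ : ℂ) ^ 3 * ((γ : ℂ) * (ξ : ℂ) ^ 2 - (β : ℂ))) * I_sq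

lemma symbol_coeff_nonpos {β γ R₁ : ℝ} (hγ : γ < 0) (hβ : 0 < β) (hR₁ : 0 ≤ R₁) (ξ : ℝ) :
    (γ * ξ ^ 2 - β) * ξ ^ 2 * R₁ ^ 3 ≤ 0 := by
  have hneg : γ * ξ ^ 2 - β < 0 := by nlinarith [sq_nonneg ξ]
  rw [mul_assoc]
  exact mul_nonpos_of_nonpos_of_nonneg hneg.le (by positivity)

lemma exists_symbol_coeff_pos {β γ R₁ : ℝ} (hγ : 0 < γ) (hβ : 0 < β) (hR₁ : 0 < R₁) :
    ∃ ξ : ℝ, 0 < (γ * ξ ^ 2 - β) * ξ ^ 2 * R₁ ^ 3 := by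
  refine ⟨√(2 * β / γ), ?_⟩
  rw [Real.sq_sqrt (by positivity), show γ * (2 * β / γ) - β = β by field_simp; ring]
  positivity

theorem stmt16_general (β γ s R₁ : ℝ) (hR₁ : 0 < R₁)
    (M : ℝ → ℂ → Matrix (Fin 2) (Fin 2) ℂ)
    (hM : ∀ (ξ : ℝ) (lam : ℂ), M ξ lam =
      !![lam + (ξ : ℂ) * (s : ℂ) * Complex.I,
          Complex.I * (ξ : ℂ) * (R₁ : ℂ) * ((γ : ℂ) * (ξ : ℂ) ^ 2 - (β : ℂ));
        -Complex.I * (ξ : ℂ) * (R₁ : ℂ) ^ 2,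
          lam + (ξ : ℂ) * (s : ℂ) * Complex.I]) :
    (∀ (ξ : ℝ) (lam : ℂ), (M ξ lam).det = 0 ↔
      (lam + (ξ : ℂ) * (s : ℂ) * Complex.I) ^ 2 =
        (((γ * ξ ^ 2 - β) * ξ ^ 2 * R₁ ^ 3 : ℝ) : ℂ)) ∧
    (γ < 0 → 0 < β → ∀ (ξ : ℝ) (lam : ℂ), (M ξ lam).det = 0 → lam.re ≤ 0) ∧
    (0 < γ → 0 < β → ∃ (ξ : ℝ) (lam : ℂ), (M ξ lam).det = 0 ∧ 0 < lam.re) := by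
  have hdet : ∀ (ξ : ℝ) (lam : ℂ), (M ξ lam).det = 0 ↔
      (lam + (ξ : ℂ) * (s : ℂ) * I) ^ 2 = (((γ * ξ ^ 2 - β) * ξ ^ 2 * R₁ ^ 3 : ℝ) : ℂ) := by
    intro ξ lam
    rw [hM, det_symbol, sub_eq_zero]
  refine ⟨hdet, fun hγ hβ ξ lam h => ?_, fun hγ hβ => ?_⟩
  · have hre := re_eq_zero_of_sq_eq_ofReal_of_nonpos
      (symbol_coeff_nonpos hγ hβ hR₁.le ξ) ((hdet ξ lam).mp h)
    simpa using hre.le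
  · obtain ⟨ξ, hpos⟩ := exists_symbol_coeff_pos hγ hβ hR₁
    obtain ⟨z, hz, hzre⟩ := exists_sq_eq_ofReal_re_pos hpos
    refine ⟨ξ, z - (ξ : ℂ) * (s : ℂ) * I, ?_, by simpa using hzre⟩
    rw [hdet, sub_add_cancel, hz]

/-- the 2×2 matrix M̂(ξ,λ) = [[λ+iξs, iξR₁(γξ²−β)], [−iξR₁², λ+iξs]]
is singular iff λ = −iξs ± √((γξ²−β)ξ²R₁³), i.e. iff
(λ+iξs)² = (γξ²−β)ξ²R₁³. Consequently, if γ < 0 and β > 0 then every root λ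
has Re λ ≤ 0, while if γ > 0 and β > 0 there are ξ ∈ ℝ and a root λ with
Re λ > 0. -/
theorem stmt16 (β γ s R₁ : ℝ) (hβ : β ≠ 0) (hγ : γ ≠ 0) (hR₁ : 0 < R₁)
    (M : ℝ → ℂ → Matrix (Fin 2) (Fin 2) ℂ)
    (hM : ∀ (ξ : ℝ) (lam : ℂ), M ξ lam =
      !![lam + (ξ : ℂ) * (s : ℂ) * Complex.I,
          Complex.I * (ξ : ℂ) * (R₁ : ℂ) * ((γ : ℂ) * (ξ : ℂ) ^ 2 - (β : ℂ));
        -Complex.I * (ξ : ℂ) * (R₁ : ℂ) ^ 2,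
          lam + (ξ : ℂ) * (s : ℂ) * Complex.I]) :
    (∀ (ξ : ℝ) (lam : ℂ), (M ξ lam).det = 0 ↔
      (lam + (ξ : ℂ) * (s : ℂ) * Complex.I) ^ 2 =
        (((γ * ξ ^ 2 - β) * ξ ^ 2 * R₁ ^ 3 : ℝ) : ℂ)) ∧
    (γ < 0 → 0 < β → ∀ (ξ : ℝ) (lam : ℂ), (M ξ lam).det = 0 → lam.re ≤ 0) ∧
    (0 < γ → 0 < β → ∃ (ξ : ℝ) (lam : ℂ), (M ξ lam).det = 0 ∧ 0 < lam.re) :=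
  stmt16_general β γ s R₁ hR₁ M hM
end

section
/- For λ real with 0 < λ small, the two branches of roots of μ⁴ + α₂μ² + α₁μ + α₀ = 0 bifurcating from μ = 0 admit expansions μ = λμ₁ + O(λ³) with μ₁ = 1/(s ± √(βR₁³)); in particular, when 0 < s < √(βR₁³), the two branches have leading coefficients of opposite signs, so one root moves into the right half-plane and one into the left half-plane. -/
/-!
Multiplying the quartic by `c = R₁³γ` turns it into `(λ - sμ)² = μ² (b + cμ²)` with
`b = βR₁³`, so its small roots are exactly the solutions of `μ (s ± √(b + cμ²)) = λ`.
Each of these equations has the form `μ k(μ) = λ` with `k` continuous and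
`k(μ) = k₀ + O(μ²)`, `k₀ = s ± √b ≠ 0`; the intermediate value theorem yields a root
`μ = O(λ)` with the sign of `k₀`, and then `μ - λ/k₀ = μ (k₀ - k(μ)) / k₀ = O(λ³)`.
-/

open Filter Topology Asymptotics

lemma exists_mem_uIcc_mul_eq {k : ℝ → ℝ} {k₀ l : ℝ} (hk : Continuous k) (hk₀ : k₀ ≠ 0)
    (hl : 0 ≤ l) (hnear : |k (2 * l / k₀) - k₀| ≤ |k₀| / 2) :
    ∃ μ ∈ Set.uIcc 0 (2 * l / k₀), μ * k μ = l := by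
  set m := 2 * l / k₀
  have hhalf : k₀ ^ 2 / 2 ≤ k m * k₀ := by
    have h := neg_abs_le ((k m - k₀) * k₀)
    rw [abs_mul] at h
    nlinarith [sq_abs k₀, abs_nonneg k₀]
  have hend : l ≤ m * k m := by
    have hm : m * k m = 2 * l * (k m * k₀) / k₀ ^ 2 := by simp only [m]; field_simp
    rw [hm, le_div_iff₀ (by positivity)]
    nlinarith
  have hcont : ContinuousOn (fun μ => μ * k μ) (Set.uIcc 0 m) :=
    (continuous_id.mul hk).continuousOn
  simpa using intermediate_value_uIcc hcont (by simpa using Set.mem_uIcc_of_le hl hend)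

lemma abs_sub_mul_one_div_le_of_mul_eq {μ l κ k₀ K : ℝ} (hk₀ : k₀ ≠ 0) (heq : μ * κ = l)
    (hK₀ : 0 ≤ K) (hK : |κ - k₀| ≤ K * μ ^ 2) (hμ : |μ| ≤ 2 * l / |k₀|) :
    |μ - l * (1 / k₀)| ≤ 8 * K / |k₀| ^ 4 * l ^ 3 := by
  have hdiff : μ - l * (1 / k₀) = μ * (k₀ - κ) / k₀ := by
    rw [← heq]; field_simp
  calc |μ - l * (1 / k₀)| = |μ| * |κ - k₀| / |k₀| := by
        rw [hdiff, abs_div, abs_mul, abs_sub_comm k₀]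
    _ ≤ |μ| * (K * μ ^ 2) / |k₀| := by gcongr
    _ = K * |μ| ^ 3 / |k₀| := by rw [← sq_abs μ]; ring
    _ ≤ K * (2 * l / |k₀|) ^ 3 / |k₀| := by gcongr
    _ = 8 * K / |k₀| ^ 4 * l ^ 3 := by field_simp; ring

theorem exists_branch_mul_eq_of_isBigO {k : ℝ → ℝ} {k₀ : ℝ} (hk : Continuous k) (hk₀ : k₀ ≠ 0)
    (hkO : (fun μ => k μ - k₀) =O[𝓝 0] (fun μ => μ ^ 2)) :
    ∃ μ : ℝ → ℝ, (∀ᶠ l in 𝓝[>] 0, μ l * k (μ l) = l ∧ 0 < μ l * k₀) ∧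
      Tendsto μ (𝓝[>] 0) (𝓝 0) ∧
      (fun l => μ l - l * (1 / k₀)) =O[𝓝[>] 0] (fun l => l ^ 3) := by
  obtain ⟨K, hK₀, hK⟩ := hkO.exists_nonneg
  have hk_tendsto : Tendsto (fun μ => k μ - k₀) (𝓝 0) (𝓝 0) :=
    hkO.trans_tendsto ((continuous_pow 2).tendsto' 0 0 (by simp))
  have hhalf : ∀ᶠ μ in 𝓝 0, |k μ - k₀| < |k₀| / 2 := by
    have hk₀' : ‖(0 : ℝ)‖ < |k₀| / 2 := by rw [norm_zero]; exact half_pos (abs_pos.2 hk₀)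
    simpa using hk_tendsto.norm.eventually_lt_const hk₀'
  obtain ⟨ε, hε, hnear⟩ := Metric.eventually_nhds_iff.1 (hK.bound.and hhalf)
  simp only [Real.dist_eq, sub_zero, Real.norm_eq_abs, abs_pow, sq_abs] at hnear
  have hbound_tendsto : Tendsto (fun l : ℝ => 2 * l / |k₀|) (𝓝 0) (𝓝 0) :=
    ((continuous_const.mul continuous_id).div_const _).tendsto' 0 0 (by simp)
  have hsmall : ∀ᶠ l in 𝓝[>] (0 : ℝ), 0 < l ∧ 2 * l / |k₀| < ε :=
    eventually_mem_nhdsWithin.and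
      (eventually_nhdsWithin_of_eventually_nhds (hbound_tendsto.eventually_lt_const hε))
  have hroot : ∀ᶠ l in 𝓝[>] (0 : ℝ), ∃ μ, μ * k μ = l ∧ 0 < l ∧ |μ| ≤ 2 * l / |k₀| ∧
      |k μ - k₀| ≤ K * μ ^ 2 ∧ |k μ - k₀| < |k₀| / 2 := by
    filter_upwards [hsmall] with l ⟨hl, hlε⟩
    have hm : |2 * l / k₀| < ε := by rwa [abs_div, abs_mul, abs_two, abs_of_pos hl]
    obtain ⟨μ, hμ, heq⟩ := exists_mem_uIcc_mul_eq hk hk₀ hl.le (hnear hm).2.le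
    have hμl : |μ| ≤ 2 * l / |k₀| := by
      simpa [abs_div, abs_of_pos hl] using Set.abs_sub_left_of_mem_uIcc hμ
    exact ⟨μ, heq, hl, hμl, hnear (hμl.trans_lt hlε)⟩
  obtain ⟨μ, hμ⟩ := hroot.choice
  refine ⟨μ, ?_, ?_, ?_⟩
  · filter_upwards [hμ] with l ⟨heq, hl, _, _, hclose⟩
    have hκ : 0 < k (μ l) * k₀ := by
      have h := neg_abs_le ((k (μ l) - k₀) * k₀)
      rw [abs_mul] at h
      nlinarith [sq_abs k₀, abs_pos.2 hk₀]
    have hprod : 0 < μ l * k₀ * k (μ l) ^ 2 := by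
      rw [show μ l * k₀ * k (μ l) ^ 2 = (μ l * k (μ l)) * (k (μ l) * k₀) by ring, heq]
      positivity
    exact ⟨heq, (pos_iff_pos_of_mul_pos hprod).2 (by nlinarith)⟩
  · refine squeeze_zero_norm' (hμ.mono fun l hl => hl.2.2.1) ?_
    exact tendsto_nhdsWithin_of_tendsto_nhds hbound_tendsto
  · refine IsBigO.of_bound (8 * K / |k₀| ^ 4) ?_
    filter_upwards [hμ] with l ⟨heq, hl, hμl, hK, _⟩
    rw [Real.norm_eq_abs, Real.norm_eq_abs, abs_of_pos (pow_pos hl 3)]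
    exact abs_sub_mul_one_div_le_of_mul_eq hk₀ heq hK₀ hK hμl

lemma sqrt_add_mul_sq_sub_sqrt_isBigO {b : ℝ} (hb : 0 < b) (c : ℝ) :
    (fun μ : ℝ => Real.sqrt (b + c * μ ^ 2) - Real.sqrt b) =O[𝓝 0] (fun μ => μ ^ 2) := by
  have hlip : (fun x => Real.sqrt x - Real.sqrt b) =O[𝓝 b] (fun x => x - b) :=
    (Real.hasDerivAt_sqrt hb.ne').isBigO_sub
  have harg : Tendsto (fun μ : ℝ => b + c * μ ^ 2) (𝓝 0) (𝓝 b) :=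
    (continuous_const.add (continuous_const.mul (continuous_pow 2))).tendsto' 0 b (by simp)
  refine (hlip.comp_tendsto harg).trans ?_
  simpa [Function.comp_def] using isBigO_const_mul_self c (fun μ : ℝ => μ ^ 2) (𝓝 0)

lemma quartic_eq_zero_of_sq_eq {b c s l μ : ℝ} (hc : c ≠ 0)
    (h : (l - s * μ) ^ 2 = μ ^ 2 * (b + c * μ ^ 2)) :
    μ ^ 4 + (b - s ^ 2) / c * μ ^ 2 + 2 * s * l / c * μ - l ^ 2 / c = 0 := by
  field_simp
  linear_combination -h

theorem exists_quartic_root_branch {b c s σ : ℝ} (hb : 0 < b) (hc : c ≠ 0) (hσ : σ ^ 2 = 1)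
    (hk₀ : s + σ * Real.sqrt b ≠ 0) :
    ∃ μ : ℝ → ℝ,
      (∀ᶠ l in 𝓝[>] 0, μ l ^ 4 + (b - s ^ 2) / c * μ l ^ 2 + 2 * s * l / c * μ l - l ^ 2 / c = 0 ∧
        0 < μ l * (s + σ * Real.sqrt b)) ∧
      (fun l => μ l - l * (1 / (s + σ * Real.sqrt b))) =O[𝓝[>] 0] (fun l => l ^ 3) := by
  have hkO : (fun μ : ℝ => (s + σ * Real.sqrt (b + c * μ ^ 2)) - (s + σ * Real.sqrt b))
      =O[𝓝 0] (fun μ => μ ^ 2) := by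
    simpa [mul_sub] using (sqrt_add_mul_sq_sub_sqrt_isBigO hb c).const_mul_left σ
  obtain ⟨μ, hμ, hμ_tendsto, hμO⟩ := exists_branch_mul_eq_of_isBigO (by fun_prop) hk₀ hkO
  have hpos : ∀ᶠ l in 𝓝[>] 0, 0 ≤ b + c * μ l ^ 2 := by
    have : ∀ᶠ x in 𝓝 (0 : ℝ), 0 < b + c * x ^ 2 :=
      continuousAt_const.eventually_lt (by fun_prop) (by simpa using hb)
    exact (hμ_tendsto.eventually this).mono fun l hl => hl.le
  refine ⟨μ, ?_, hμO⟩
  filter_upwards [hμ, hpos] with l ⟨heq, hsign⟩ hpos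
  refine ⟨quartic_eq_zero_of_sq_eq hc ?_, hsign⟩
  calc (l - s * μ l) ^ 2 = σ ^ 2 * μ l ^ 2 * Real.sqrt (b + c * μ l ^ 2) ^ 2 := by
        linear_combination (-(l - s * μ l + σ * μ l * Real.sqrt (b + c * μ l ^ 2))) * heq
    _ = μ l ^ 2 * (b + c * μ l ^ 2) := by rw [hσ, Real.sq_sqrt hpos]; ring

/-- for real λ with 0 < λ small, the two branches of roots of
μ⁴ + α₂μ² + α₁μ + α₀ = 0 (α₂ = (βR₁³−s²)/(R₁³γ), α₁ = 2sλ/(R₁³γ),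
α₀ = −λ²/(R₁³γ)) bifurcating from μ = 0 admit expansions μ = λμ₁ + O(λ³) with
μ₁ = 1/(s ± √(βR₁³)); when 0 < s < √(βR₁³) the two leading coefficients have
opposite signs, so one root moves into the right half-plane and one into the
left half-plane. -/
theorem stmt19 (β γ s R₁ : ℝ) (hβ : 0 < β) (hγ : γ ≠ 0) (hR₁ : 0 < R₁)
    (hs : 0 < s) (hs' : s < Real.sqrt (β * R₁ ^ 3)) :
    ∃ μp μm : ℝ → ℝ,
      (∀ᶠ l in 𝓝[>] (0 : ℝ),
        (μp l ^ 4 + (β * R₁ ^ 3 - s ^ 2) / (R₁ ^ 3 * γ) * μp l ^ 2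
          + 2 * s * l / (R₁ ^ 3 * γ) * μp l - l ^ 2 / (R₁ ^ 3 * γ) = 0) ∧
        (μm l ^ 4 + (β * R₁ ^ 3 - s ^ 2) / (R₁ ^ 3 * γ) * μm l ^ 2
          + 2 * s * l / (R₁ ^ 3 * γ) * μm l - l ^ 2 / (R₁ ^ 3 * γ) = 0)) ∧
      (fun l => μp l - l * (1 / (s + Real.sqrt (β * R₁ ^ 3))))
        =O[𝓝[>] (0 : ℝ)] (fun l => l ^ 3) ∧
      (fun l => μm l - l * (1 / (s - Real.sqrt (β * R₁ ^ 3))))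
        =O[𝓝[>] (0 : ℝ)] (fun l => l ^ 3) ∧
      0 < 1 / (s + Real.sqrt (β * R₁ ^ 3)) ∧
      1 / (s - Real.sqrt (β * R₁ ^ 3)) < 0 ∧
      (∀ᶠ l in 𝓝[>] (0 : ℝ), 0 < μp l ∧ μm l < 0) := by
  have hb : 0 < β * R₁ ^ 3 := by positivity
  have hc : R₁ ^ 3 * γ ≠ 0 := mul_ne_zero (by positivity) hγ
  have hplus : 0 < s + Real.sqrt (β * R₁ ^ 3) := by positivity
  have hminus : s - Real.sqrt (β * R₁ ^ 3) < 0 := sub_neg.2 hs'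
  obtain ⟨μp, hp, hpO⟩ :=
    exists_quartic_root_branch (σ := 1) hb hc (one_pow 2) (by rw [one_mul]; exact hplus.ne')
  obtain ⟨μm, hm, hmO⟩ :=
    exists_quartic_root_branch (σ := -1) hb hc (by norm_num) (by rw [neg_one_mul]; exact hminus.ne)
  simp only [one_mul, neg_one_mul, ← sub_eq_add_neg] at hp hpO hm hmO
  refine ⟨μp, μm, ?_, hpO, hmO, one_div_pos.2 hplus, one_div_neg.2 hminus, ?_⟩
  · filter_upwards [hp, hm] with l hpl hml using ⟨hpl.1, hml.1⟩
  · filter_upwards [hp, hm] with l hpl hml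
    exact ⟨pos_of_mul_pos_left hpl.2 hplus.le, neg_of_mul_pos_left hml.2 hminus.le⟩
end
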